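/- Per-scale second-moment smoothness estimate: There is a constant C = C(N) such that for all x, x₀, y ∈ ℝ^N and every k ∈ ℤ, E_ω |Δ_k^{D(ω)} δ_y(x) − Δ_k^{D(ω)} δ_y(x₀)|² ≤ C |x−x₀| 2^{−2kN−k}. (This follows since the probability that x and x₀ fail to lie in the same child of the same cube of sidelength 2^k of D(ω) is at most C|x−x₀|2^{−k}, together with the bound |Δ_k^{D(ω)} δ_y(x)| ≤ C 2^{−kN}.) -/

import Mathlib

open MeasureTheory Filter Topology
open scoped ENNReal

noncomputable section

namespace Treil

/-- The cube of sidelength `2^k` of the dyadic lattice `t + 𝒟₀` that contains `x`. -/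
def dcube {N : ℕ} (t : Fin N → ℝ) (k : ℤ) (x : Fin N → ℝ) : Set (Fin N → ℝ) :=
  {y | ∀ i, ⌊(y i - t i) / (2 : ℝ) ^ k⌋ = ⌊(x i - t i) / (2 : ℝ) ^ k⌋}

/-- The averaging operator `E_k` over the cubes of sidelength `2^k` of the (generalized)
dyadic lattice whose layer at scale `2^k` has offset `c k`. -/
def avg {N : ℕ} (c : ℤ → Fin N → ℝ) (k : ℤ) (f : (Fin N → ℝ) → ℝ) (x : Fin N → ℝ) : ℝ :=
  (∫ y in dcube (c k) k x, f y) / ((2 : ℝ) ^ k) ^ (N : ℕ)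

/-- The martingale difference `Δ_k = E_{k-1} - E_k`. -/
def mdiff {N : ℕ} (c : ℤ → Fin N → ℝ) (k : ℤ) (f : (Fin N → ℝ) → ℝ) (x : Fin N → ℝ) : ℝ :=
  avg c (k - 1) f x - avg c k f x

/-- The square of the dyadic square function, `|S_𝒟 f (x)|² = ∑_k |Δ_k f (x)|²`,
with values in `[0,∞]`. -/
def Ssq {N : ℕ} (c : ℤ → Fin N → ℝ) (f : (Fin N → ℝ) → ℝ) (x : Fin N → ℝ) : ℝ≥0∞ :=
  ∑' k : ℤ, ENNReal.ofReal ((mdiff c k f x) ^ 2)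

/-- The offset (at scale `2^k`) of the random dyadic lattice on `ℝ` built from the uniform
shift `u ∈ [0,1)` and the fair signs `ξ_j`, `j ≥ 1`, encoded as the binary digits of
`v ∈ [0,1)` (`ξ_j = -1` iff `⌊v 2^j⌋` is odd); the interval `I_0 = [u-1, u)` belongs to the
lattice, and `I_k` is obtained from `I_{k-1}` by adjoining the right neighbour if `ξ_k = +1`
and the left neighbour if `ξ_k = -1`. -/
def randOffset1 (u v : ℝ) (k : ℤ) : ℝ :=
  u - 1 - ∑ j ∈ Finset.range k.toNat, (if ⌊v * 2 ^ (j + 1)⌋ % 2 = 1 then (2 : ℝ) ^ j else 0)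

/-- The sample space for the random dyadic lattice in `ℝ^N`: each of the `N` independent
coordinate lattices is driven by a pair (uniform shift, digit-encoded fair signs). -/
abbrev RSpace (N : ℕ) := Fin N → ℝ × ℝ

/-- The probability measure of the random dyadic lattice in `ℝ^N`. -/
def randMeasure (N : ℕ) : Measure (RSpace N) :=
  Measure.pi fun _ =>
    (volume.restrict (Set.Ico (0 : ℝ) 1)).prod (volume.restrict (Set.Ico (0 : ℝ) 1))

/-- The per-scale offsets of the random dyadic lattice `𝒟(ω)` in `ℝ^N`. -/
def randOffset {N : ℕ} (ω : RSpace N) (k : ℤ) : Fin N → ℝ :=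
  fun i => randOffset1 (ω i).1 (ω i).2 k

/-- An (axis-parallel, half-open) cube in `ℝ^N`. -/
def IsPCube {N : ℕ} (Q : Set (Fin N → ℝ)) : Prop :=
  ∃ (a : Fin N → ℝ) (l : ℝ), 0 < l ∧ Q = Set.univ.pi fun i => Set.Ico (a i) (a i + l)

/-- An `H¹`-atom: supported in a cube `Q`, bounded by `|Q|⁻¹`, with zero mean. -/
def IsAtom {N : ℕ} (a : (Fin N → ℝ) → ℝ) : Prop :=
  ∃ Q : Set (Fin N → ℝ), IsPCube Q ∧ (∀ x, x ∉ Q → a x = 0) ∧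
    (∀ x, |a x| ≤ ((volume Q).toReal)⁻¹) ∧ (∫ x, a x) = 0

/-- The atomic `H¹(ℝ^N)` norm: the infimum of `∑ |λ_j|` over all decompositions
`f = ∑ λ_j a_j` converging in `L¹`, with atoms `a_j`. -/
def H1norm {N : ℕ} (f : (Fin N → ℝ) → ℝ) : ℝ≥0∞ :=
  ⨅ (lam : ℕ → ℝ) (a : ℕ → (Fin N → ℝ) → ℝ) (_ : ∀ j, IsAtom (a j))
    (_ : Tendsto (fun m => ∫ x, |f x - ∑ j ∈ Finset.range m, lam j * a j x|) atTop (𝓝 0)),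
    ∑' j, ENNReal.ofReal |lam j|
/-- The martingale difference of the unit point mass `δ_y`:
`Δ_k δ_y (x) = 1_{Q'}(y)/|Q'| - 1_Q(y)/|Q|`, where `Q` is the cube of sidelength `2^k`
containing `x` and `Q'` its child containing `x`. -/
def mdiffDelta {N : ℕ} (c : ℤ → Fin N → ℝ) (k : ℤ) (y x : Fin N → ℝ) : ℝ :=
  (dcube (c (k - 1)) (k - 1) x).indicator (fun _ => (((2 : ℝ) ^ (k - 1)) ^ (N : ℕ))⁻¹) y -
    (dcube (c k) k x).indicator (fun _ => (((2 : ℝ) ^ k) ^ (N : ℕ))⁻¹) y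

/-!
Off a bad event, `x` and `x₀` lie in the same cube of `𝒟(ω)` at both scales `2^k` and `2^(k-1)`,
so the two martingale differences coincide; on it their difference is at most
`2 · 2^(-(k-1)N)`. The bad event is the union, over the coordinates `i` and the two scales, of the
event that the random lattice on `ℝ` separates `x i` from `x₀ i`, and each of these has
probability at most `2 |x i - x₀ i| / 2^κ` at scale `2^κ`, because the offset of that lattice
has density at most `2^(-κ₊)` on an interval of length `2^κ₊`.
-/

/-- `signSum m v = ∑_{j < m, ξ_{j+1} = -1} 2^j`: the integer by which the left endpoint of `I_m`
lies to the left of that of `I_0`. -/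
def signSum (m : ℕ) (v : ℝ) : ℤ :=
  ∑ j ∈ Finset.range m, if ⌊v * 2 ^ (j + 1)⌋ % 2 = 1 then (2 : ℤ) ^ j else 0

lemma randOffset1_eq (u v : ℝ) (k : ℤ) :
    randOffset1 u v k = u - 1 - signSum k.toNat v := by
  simp only [randOffset1, signSum, Int.cast_sum, apply_ite (Int.cast : ℤ → ℝ)]
  push_cast
  rfl

lemma signSum_succ (m : ℕ) (v : ℝ) :
    signSum (m + 1) v = signSum m v + if ⌊v * 2 ^ (m + 1)⌋ % 2 = 1 then (2 : ℤ) ^ m else 0 :=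
  Finset.sum_range_succ _ _

lemma signSum_nonneg (m : ℕ) (v : ℝ) : 0 ≤ signSum m v :=
  Finset.sum_nonneg fun _ _ => by positivity

lemma signSum_lt_two_pow (m : ℕ) (v : ℝ) : signSum m v < 2 ^ m := by
  induction m with
  | zero => simp [signSum]
  | succ m ih =>
    have h2m : (2 : ℤ) ^ (m + 1) = 2 ^ m * 2 := pow_succ 2 m
    rw [signSum_succ]
    split_ifs <;> linarith [pow_pos (two_pos : (0 : ℤ) < 2) m]

lemma floor_mul_two_pow_succ (m : ℕ) (v : ℝ) :
    ⌊v * 2 ^ (m + 1)⌋ = 2 * ⌊v * 2 ^ m⌋ + ⌊v * 2 ^ (m + 1)⌋ % 2 := by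
  have h : ⌊v * 2 ^ m⌋ = ⌊v * 2 ^ (m + 1)⌋ / 2 := by
    have := Int.floor_div_natCast (v * 2 ^ (m + 1)) 2
    rw [pow_succ, ← mul_assoc, Nat.cast_ofNat, mul_div_cancel_right₀ _ two_ne_zero] at this
    rw [this, pow_succ, mul_assoc]
    rfl
  omega

/-- `signSum m v` is the bit reversal of the first `m` binary digits of `v`, so it determines
them. -/
lemma floor_mul_two_pow_eq_of_signSum_eq {v w : ℝ} (hv : v ∈ Set.Ico (0 : ℝ) 1)
    (hw : w ∈ Set.Ico (0 : ℝ) 1) :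
    ∀ m, signSum m v = signSum m w → ⌊v * 2 ^ m⌋ = ⌊w * 2 ^ m⌋
  | 0, _ => by simp [Int.floor_eq_zero_iff.mpr hv, Int.floor_eq_zero_iff.mpr hw]
  | m + 1, h => by
    have hlow : signSum m v = signSum m w := by
      have := congrArg (· % 2 ^ m) h
      simp only [signSum_succ] at this
      split_ifs at this <;> simpa [Int.emod_eq_of_lt (signSum_nonneg m _)
        (signSum_lt_two_pow m _)] using this
    have hdigit : ⌊v * 2 ^ (m + 1)⌋ % 2 = ⌊w * 2 ^ (m + 1)⌋ % 2 := by
      rw [signSum_succ, signSum_succ, hlow] at h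
      split_ifs at h with h₁ h₂ h₂
      · rw [h₁, h₂]
      · exact absurd (add_left_cancel h) (by positivity)
      · exact absurd (add_left_cancel h).symm (by positivity)
      · rw [Int.emod_two_ne_one.mp h₁, Int.emod_two_ne_one.mp h₂]
    rw [floor_mul_two_pow_succ m v, floor_mul_two_pow_succ m w,
      floor_mul_two_pow_eq_of_signSum_eq hv hw m hlow, hdigit]

lemma volume_signSum_eq_le (m : ℕ) (s : ℤ) :
    volume ({v : ℝ | signSum m v = s} ∩ Set.Ico 0 1) ≤ ENNReal.ofReal ((2 ^ m)⁻¹) := by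
  rcases ({v : ℝ | signSum m v = s} ∩ Set.Ico 0 1).eq_empty_or_nonempty with hempty | ⟨w, hws, hw⟩
  · simp [hempty]
  have hpos : (0 : ℝ) < 2 ^ m := by positivity
  set j := ⌊w * 2 ^ m⌋
  have hsub : {v : ℝ | signSum m v = s} ∩ Set.Ico 0 1 ⊆ Set.Ico (j / 2 ^ m) ((j + 1) / 2 ^ m) := by
    rintro v ⟨hvs, hv⟩
    have hj := Int.floor_eq_iff.mp
      (floor_mul_two_pow_eq_of_signSum_eq hv hw m (hvs.trans hws.symm))
    constructor
    · rw [div_le_iff₀ hpos]; exact hj.1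
    · rw [lt_div_iff₀ hpos]; exact hj.2
  calc _ ≤ volume (Set.Ico ((j : ℝ) / 2 ^ m) ((j + 1) / 2 ^ m)) := measure_mono hsub
    _ = ENNReal.ofReal ((2 ^ m)⁻¹) := by rw [Real.volume_Ico, ← sub_div]; norm_num

/-- The offsets `t` for which `a` and `b` lie in different intervals of the lattice `t + hℤ`. -/
def separatingOffsets (h a b : ℝ) : Set ℝ := {t | ⌊(a - t) / h⌋ ≠ ⌊(b - t) / h⌋}

lemma separatingOffsets_comm (h a b : ℝ) : separatingOffsets h a b = separatingOffsets h b a := by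
  ext t; exact ne_comm

lemma measurableSet_separatingOffsets (h a b : ℝ) : MeasurableSet (separatingOffsets h a b) :=
  measurableSet_eq_fun (by fun_prop) (by fun_prop) |>.compl

lemma separatingOffsets_subset_iUnion {h a b : ℝ} (hh : 0 < h) (hab : a ≤ b) :
    separatingOffsets h a b ⊆ ⋃ n : ℤ, Set.Ioc (a - n * h) (b - n * h) := by
  intro t ht
  have hlt : ⌊(a - t) / h⌋ < ⌊(b - t) / h⌋ :=
    (Int.floor_mono (by gcongr)).lt_of_ne ht
  have h₁ : (a - t) / h < ⌊(b - t) / h⌋ := Int.floor_lt.mp hlt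
  have h₂ : (⌊(b - t) / h⌋ : ℝ) ≤ (b - t) / h := Int.floor_le _
  rw [div_lt_iff₀ hh] at h₁
  rw [le_div_iff₀ hh] at h₂
  exact Set.mem_iUnion.mpr ⟨⌊(b - t) / h⌋, by constructor <;> linarith⟩

/-- At most `M + 1` of the intervals `(a - nh, b - nh]` meet an interval of length `Mh`. -/
lemma volume_separatingOffsets_inter_Ico_le {h a b : ℝ} (hh : 0 < h) (hab : a ≤ b)
    (hba : b - a ≤ h) (α : ℝ) (M : ℕ) :
    volume (separatingOffsets h a b ∩ Set.Ico α (α + M * h)) ≤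
      ENNReal.ofReal ((M + 1) * (b - a)) := by
  set n₀ := ⌊(a - α) / h⌋
  have hsub : separatingOffsets h a b ∩ Set.Ico α (α + M * h) ⊆
      ⋃ n ∈ Finset.Icc (n₀ - M + 1) (n₀ + 1), Set.Ioc (a - n * h) (b - n * h) := by
    rintro t ⟨ht, htα, htM⟩
    obtain ⟨n, hna, hnb⟩ := Set.mem_iUnion.mp (separatingOffsets_subset_iUnion hh hab ht)
    have hlow : n₀ < n + M := by
      rw [Int.floor_lt, div_lt_iff₀ hh]; push_cast; nlinarith
    have hup : n - 1 ≤ n₀ := by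
      rw [Int.le_floor, le_div_iff₀ hh]; push_cast; nlinarith
    exact Set.mem_biUnion (Finset.mem_Icc.mpr ⟨by omega, by omega⟩) ⟨hna, hnb⟩
  calc _ ≤ ∑ n ∈ Finset.Icc (n₀ - M + 1) (n₀ + 1), volume (Set.Ioc (a - n * h) (b - n * h)) :=
        (measure_mono hsub).trans (measure_biUnion_finset_le _ _)
    _ = ∑ n ∈ Finset.Icc (n₀ - M + 1) (n₀ + 1), ENNReal.ofReal (b - a) := by
        simp only [Real.volume_Ioc, sub_sub_sub_cancel_right]
    _ = ENNReal.ofReal ((M + 1) * (b - a)) := by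
        rw [Finset.sum_const, Int.card_Icc, nsmul_eq_mul,
          show n₀ + 1 + 1 - (n₀ - M + 1) = ((M + 1 : ℕ) : ℤ) by push_cast; ring, Int.toNat_natCast,
          ENNReal.ofReal_mul (by positivity)]
        norm_cast

instance : IsProbabilityMeasure (volume.restrict (Set.Ico (0 : ℝ) 1)) := ⟨by simp⟩

abbrev randMeasure1 : Measure (ℝ × ℝ) :=
  (volume.restrict (Set.Ico (0 : ℝ) 1)).prod (volume.restrict (Set.Ico (0 : ℝ) 1))

lemma volume_restrict_Ico_preimage_add_intCast (T : Set ℝ) (n : ℤ) :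
    volume.restrict (Set.Ico (0 : ℝ) 1) {u | u + n ∈ T} = volume (T ∩ Set.Ico (n : ℝ) (n + 1)) := by
  rw [Measure.restrict_apply' measurableSet_Ico,
    ← measure_preimage_add_right volume (n : ℝ) (T ∩ _)]
  congr 1
  ext u
  simp only [Set.mem_inter_iff, Set.mem_ofPred_eq, Set.mem_preimage, Set.mem_Ico]
  constructor <;> rintro ⟨h, h₁, h₂⟩ <;> exact ⟨h, by linarith, by linarith⟩

/-- At scale `2^k` the offset is `u + n` with `u` uniform on `[0,1)` and `n = -1 - signSum m v`,
each of the `2^m` values of `n` having probability at most `2^{-m}`, `m = k₊`. -/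
lemma randMeasure1_randOffset1_preimage_le (k : ℤ) {T : Set ℝ} (hT : MeasurableSet T) :
    randMeasure1 ((fun p : ℝ × ℝ => randOffset1 p.1 p.2 k) ⁻¹' T) ≤
      ENNReal.ofReal ((2 ^ k.toNat)⁻¹) * volume (T ∩ Set.Ico (-(2 ^ k.toNat)) 0) := by
  set m := k.toNat
  set I := Finset.Ico (-(2 ^ m : ℤ)) 0
  have hsub : (fun p : ℝ × ℝ => randOffset1 p.1 p.2 k) ⁻¹' T ⊆
      ⋃ n ∈ I, {u : ℝ | u + n ∈ T} ×ˢ {v : ℝ | signSum m v = -1 - n} := by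
    intro p hp
    have := signSum_nonneg m p.2
    have := signSum_lt_two_pow m p.2
    refine Set.mem_biUnion (x := -1 - signSum m p.2) (Finset.mem_Ico.mpr ⟨by omega, by omega⟩)
      ⟨?_, by simp⟩
    simp only [Set.mem_preimage, randOffset1_eq] at hp
    simpa [sub_eq_add_neg, add_assoc] using hp
  have hdisj : Set.PairwiseDisjoint (I : Set ℤ) fun n : ℤ => T ∩ Set.Ico (n : ℝ) (n + 1) :=
    Set.PairwiseDisjoint.mono ((Set.pairwise_disjoint_Ico_intCast ℝ).set_pairwise _)
      fun _ => Set.inter_subset_right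
  have hunion : (⋃ n ∈ I, T ∩ Set.Ico (n : ℝ) (n + 1)) ⊆ T ∩ Set.Ico (-(2 ^ m)) 0 := by
    refine Set.iUnion₂_subset fun n hn => Set.inter_subset_inter_right T ?_
    obtain ⟨hn₁, hn₂⟩ := Finset.mem_Ico.mp hn
    exact Set.Ico_subset_Ico (by exact_mod_cast hn₁) (by exact_mod_cast hn₂)
  calc _ ≤ ∑ n ∈ I, randMeasure1 ({u : ℝ | u + n ∈ T} ×ˢ {v : ℝ | signSum m v = -1 - n}) :=
        (measure_mono hsub).trans (measure_biUnion_finset_le _ _)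
    _ ≤ ∑ n ∈ I, volume (T ∩ Set.Ico (n : ℝ) (n + 1)) * ENNReal.ofReal ((2 ^ m)⁻¹) := by
        refine Finset.sum_le_sum fun n _ => ?_
        rw [Measure.prod_prod, volume_restrict_Ico_preimage_add_intCast,
          Measure.restrict_apply' measurableSet_Ico]
        gcongr
        exact volume_signSum_eq_le m _
    _ = ENNReal.ofReal ((2 ^ m)⁻¹) * volume (⋃ n ∈ I, T ∩ Set.Ico (n : ℝ) (n + 1)) := by
        rw [measure_biUnion_finset hdisj fun n _ => hT.inter measurableSet_Ico,
          Finset.mul_sum]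
        simp only [mul_comm]
    _ ≤ _ := by gcongr

lemma two_pow_toNat_neg_mul_zpow (k : ℤ) : (2 : ℝ) ^ (-k).toNat * 2 ^ k = 2 ^ k.toNat := by
  rw [← zpow_natCast, ← zpow_natCast, ← zpow_add₀ two_ne_zero]
  congr 1
  omega

lemma randMeasure1_separatingOffsets_le (k : ℤ) (a b : ℝ) :
    randMeasure1 ((fun p : ℝ × ℝ => randOffset1 p.1 p.2 k) ⁻¹' separatingOffsets (2 ^ k) a b) ≤
      ENNReal.ofReal (2 * |b - a| / 2 ^ k) := by
  wlog hab : a ≤ b generalizing a b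
  · rw [separatingOffsets_comm, abs_sub_comm]
    exact this b a (le_of_not_ge hab)
  have hk : (0 : ℝ) < 2 ^ k := by positivity
  rw [abs_of_nonneg (sub_nonneg.mpr hab)]
  rcases lt_or_ge (2 ^ k) (b - a) with hfar | hnear
  · refine prob_le_one.trans (ENNReal.one_le_ofReal.mpr ?_)
    rw [le_div_iff₀ hk]
    linarith
  set m := k.toNat
  set M : ℕ := 2 ^ (-k).toNat
  have hMk : (M : ℝ) * 2 ^ k = 2 ^ m := by
    rw [← two_pow_toNat_neg_mul_zpow]; push_cast [M]; rfl
  have hM : (-(2 : ℝ) ^ m) + M * 2 ^ k = 0 := by rw [hMk]; ring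
  have hm : (2 : ℝ) ^ k ≤ 2 ^ m := by
    rw [← zpow_natCast]; exact zpow_le_zpow_right₀ one_le_two (Int.self_le_toNat k)
  calc _ ≤ ENNReal.ofReal ((2 ^ m)⁻¹) *
          volume (separatingOffsets (2 ^ k) a b ∩ Set.Ico (-2 ^ m) 0) :=
        randMeasure1_randOffset1_preimage_le k (measurableSet_separatingOffsets _ _ _)
    _ ≤ ENNReal.ofReal ((2 ^ m)⁻¹) * ENNReal.ofReal ((M + 1) * (b - a)) := by
        gcongr
        simpa only [hM] using volume_separatingOffsets_inter_Ico_le hk hab hnear (-2 ^ m) M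
    _ ≤ ENNReal.ofReal (2 * (b - a) / 2 ^ k) := by
        rw [← ENNReal.ofReal_mul (by positivity)]
        gcongr ENNReal.ofReal ?_
        have hMm : (M : ℝ) * (2 ^ m)⁻¹ = (2 ^ k)⁻¹ := by
          have : (M : ℝ) ≠ 0 := by positivity
          rw [← hMk]; field_simp
        have := inv_anti₀ hk hm
        calc (2 ^ m)⁻¹ * ((M + 1) * (b - a)) = ((M : ℝ) * (2 ^ m)⁻¹ + (2 ^ m)⁻¹) * (b - a) := by
              ring
          _ ≤ ((2 ^ k)⁻¹ + (2 ^ k)⁻¹) * (b - a) := by rw [hMm]; gcongr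
          _ = 2 * (b - a) / 2 ^ k := by ring

section Lattice

variable {N : ℕ}

lemma dcube_eq_of_mem {t : Fin N → ℝ} {k : ℤ} {x x₀ : Fin N → ℝ} (h : x₀ ∈ dcube t k x) :
    dcube t k x₀ = dcube t k x := by
  ext z
  simp only [dcube, Set.mem_ofPred_eq] at h ⊢
  simp only [h]

lemma mdiffDelta_eq_of_mem {c : ℤ → Fin N → ℝ} {k : ℤ} {x x₀ : Fin N → ℝ}
    (hk : x₀ ∈ dcube (c k) k x) (hk' : x₀ ∈ dcube (c (k - 1)) (k - 1) x) (y : Fin N → ℝ) :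
    mdiffDelta c k y x₀ = mdiffDelta c k y x := by
  rw [mdiffDelta, mdiffDelta, dcube_eq_of_mem hk, dcube_eq_of_mem hk']

lemma abs_mdiffDelta_le (c : ℤ → Fin N → ℝ) (k : ℤ) (y x : Fin N → ℝ) :
    |mdiffDelta c k y x| ≤ (((2 : ℝ) ^ (k - 1)) ^ N)⁻¹ := by
  have hscale : (((2 : ℝ) ^ k) ^ N)⁻¹ ≤ (((2 : ℝ) ^ (k - 1)) ^ N)⁻¹ := by
    gcongr <;> norm_num
  exact abs_sub_le_of_nonneg_of_le (Set.indicator_nonneg (fun _ _ => by positivity) y)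
    (Set.indicator_le_self' (fun _ _ => by positivity) y)
    (Set.indicator_nonneg (fun _ _ => by positivity) y)
    ((Set.indicator_le_self' (fun _ _ => by positivity) y).trans hscale)

lemma randMeasure_eval_preimage (i : Fin N) (A : Set (ℝ × ℝ)) :
    randMeasure N (Function.eval i ⁻¹' A) = randMeasure1 A := by
  rw [randMeasure, Set.eval_preimage, Measure.pi_pi, Finset.prod_eq_single_of_mem i
    (Finset.mem_univ i) fun j _ hj => by rw [Function.update_of_ne hj, measure_univ],
    Function.update_self]

lemma randMeasure_notMem_dcube_le (x x₀ : Fin N → ℝ) (k : ℤ) :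
    randMeasure N {ω | x₀ ∉ dcube (randOffset ω k) k x} ≤
      ENNReal.ofReal (2 * N * dist x x₀ / 2 ^ k) := by
  have hsplit : {ω : RSpace N | x₀ ∉ dcube (randOffset ω k) k x} = ⋃ i, Function.eval i ⁻¹'
      ((fun p : ℝ × ℝ => randOffset1 p.1 p.2 k) ⁻¹' separatingOffsets (2 ^ k) (x₀ i) (x i)) := by
    ext ω
    simp [dcube, separatingOffsets, randOffset]
  calc _ ≤ ∑ i, ENNReal.ofReal (2 * |x i - x₀ i| / 2 ^ k) := by
        rw [hsplit]
        refine (measure_iUnion_fintype_le _ _).trans (Finset.sum_le_sum fun i _ => ?_)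
        rw [randMeasure_eval_preimage]
        exact randMeasure1_separatingOffsets_le k (x₀ i) (x i)
    _ ≤ ∑ _ : Fin N, ENNReal.ofReal (2 * dist x x₀ / 2 ^ k) := by
        gcongr with i
        exact dist_le_pi_dist x x₀ i
    _ = ENNReal.ofReal (2 * N * dist x x₀ / 2 ^ k) := by
        rw [Finset.sum_const, Finset.card_univ, Fintype.card_fin, nsmul_eq_mul,
          ← ENNReal.ofReal_natCast, ← ENNReal.ofReal_mul (by positivity)]
        ring_nf

end Lattice

lemma sq_two_mul_inv_pow_mul_add_eq (N : ℕ) (k : ℤ) (D : ℝ) :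
    (2 * (((2 : ℝ) ^ (k - 1)) ^ N)⁻¹) ^ 2 * (2 * N * D / 2 ^ k + 2 * N * D / 2 ^ (k - 1)) =
      24 * 4 ^ N * N * D * (2 : ℝ) ^ (-(2 * k * (N : ℤ) + k)) := by
  have hexp : (2 : ℝ) ^ (-(2 * k * (N : ℤ) + k)) = (((2 : ℝ) ^ k) ^ (2 * N + 1))⁻¹ := by
    rw [zpow_neg, ← zpow_natCast, ← zpow_mul]
    congr 2
    push_cast
    ring
  rw [hexp, show (4 : ℝ) ^ N = 2 ^ N * 2 ^ N by rw [← mul_pow]; norm_num]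
  simp only [zpow_sub_one₀ (two_ne_zero' ℝ), mul_pow, inv_pow]
  field_simp
  ring

/-- **Per-scale second-moment smoothness estimate**:
`𝔼_ω |Δ_k^{𝒟(ω)} δ_y(x) - Δ_k^{𝒟(ω)} δ_y(x₀)|² ≤ C(N) |x-x₀| 2^{-2kN-k}`. -/
theorem kernel_per_scale_smoothness (N : ℕ) (hN : 0 < N) :
    ∃ C : ℝ, 0 < C ∧
      ∀ (x x₀ y : Fin N → ℝ) (k : ℤ),
        (∫⁻ ω, ENNReal.ofReal
            ((mdiffDelta (randOffset ω) k y x - mdiffDelta (randOffset ω) k y x₀) ^ 2)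
            ∂randMeasure N) ≤
          ENNReal.ofReal (C * dist x x₀ * (2 : ℝ) ^ (-(2 * k * (N : ℤ) + k))) := by
  refine ⟨24 * 4 ^ N * N, by positivity, fun x x₀ y k => ?_⟩
  set A := (((2 : ℝ) ^ (k - 1)) ^ N)⁻¹
  set Bad := {ω : RSpace N | x₀ ∉ dcube (randOffset ω k) k x} ∪
    {ω | x₀ ∉ dcube (randOffset ω (k - 1)) (k - 1) x}
  have hpoint : ∀ ω, ENNReal.ofReal
      ((mdiffDelta (randOffset ω) k y x - mdiffDelta (randOffset ω) k y x₀) ^ 2) ≤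
        Bad.indicator (fun _ => ENNReal.ofReal ((2 * A) ^ 2)) ω := by
    intro ω
    by_cases hω : ω ∈ Bad
    · rw [Set.indicator_of_mem hω]
      refine ENNReal.ofReal_le_ofReal (sq_le_sq' ?_ ?_) <;>
        linarith [abs_le.mp (abs_mdiffDelta_le (randOffset ω) k y x),
          abs_le.mp (abs_mdiffDelta_le (randOffset ω) k y x₀)]
    · simp only [Bad, Set.mem_union, Set.mem_ofPred_eq, not_or, not_not] at hω
      simp [mdiffDelta_eq_of_mem hω.1 hω.2]
  calc _ ≤ ∫⁻ ω, Bad.indicator (fun _ => ENNReal.ofReal ((2 * A) ^ 2)) ω ∂randMeasure N :=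
        lintegral_mono hpoint
    _ ≤ ENNReal.ofReal ((2 * A) ^ 2) * randMeasure N Bad := lintegral_indicator_const_le _ _
    _ ≤ ENNReal.ofReal ((2 * A) ^ 2) * (ENNReal.ofReal (2 * N * dist x x₀ / 2 ^ k) +
          ENNReal.ofReal (2 * N * dist x x₀ / 2 ^ (k - 1))) := by
        gcongr
        exact (measure_union_le _ _).trans (add_le_add (randMeasure_notMem_dcube_le x x₀ k)
          (randMeasure_notMem_dcube_le x x₀ (k - 1)))
    _ = _ := by
        rw [← ENNReal.ofReal_add (by positivity) (by positivity),
          ← ENNReal.ofReal_mul (by positivity), sq_two_mul_inv_pow_mul_add_eq]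

end Treil
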